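/- Let M(𝒜,ℬ) be a principal group of directed automorphisms of a spherically homogeneous rooted tree T_m̄ with bounded valencies, and let S ⊆ M(𝒜,ℬ) be a finite set. Then there exist n_0 ∈ ℕ and a finite set of words {w_1, …, w_k}, each of length n_0, such that for every n > n_0, setting 𝔸_n = {0⋯0w_j : 1 ≤ j ≤ k} (the level-n words obtained from the w_j by prepending zeros) and 𝔹_n = {x0⋯0w_j : x ∈ X_{m_n}∖{0}, 1 ≤ j ≤ k} (level-n words with non-zero leading letter x followed by zeros and then w_j), the following holds for every s ∈ S and every level-n vertex w: if w ∈ 𝔸_n then s|_w ∈ 𝒜_n; if w ∈ 𝔹_n then s|_w ∈ ℬ_n; and otherwise s|_w is the identity. In particular 𝔸_n and 𝔹_n are disjoint. -/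

import Mathlib

open scoped ENNReal
namespace Paper
abbrev Vertex (m : ℕ → ℕ) (n : ℕ) := (i : Fin n) → Fin (m i)
variable {m : ℕ → ℕ}
def restr {n : ℕ} (w : Vertex m (n + 1)) : Vertex m n := fun i => w i.castSucc
def restrLe {n N : ℕ} (h : n ≤ N) (w : Vertex m N) : Vertex m n :=
  fun i => w ⟨i, lt_of_lt_of_le i.2 h⟩
def AutT (m : ℕ → ℕ) : Subgroup (∀ n, Equiv.Perm (Vertex m n)) where
  carrier := {g | ∀ (n : ℕ) (w : Vertex m (n + 1)), restr (g (n + 1) w) = g n (restr w)}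
  one_mem' := by intro n w; rfl
  mul_mem' := by
    intro a b ha hb n w
    show restr ((a (n+1)) ((b (n+1)) w)) = (a n) ((b n) (restr w))
    rw [ha, hb]
  inv_mem' := by
    intro a ha n w
    show restr ((a (n+1))⁻¹ w) = (a n)⁻¹ (restr w)
    apply (a n).injective
    have h1 := ha n ((a (n+1))⁻¹ w)
    simp only [← Equiv.Perm.mul_apply, mul_inv_cancel, Equiv.Perm.one_apply] at h1
    rw [← h1, ← Equiv.Perm.mul_apply, mul_inv_cancel, Equiv.Perm.one_apply]
def app {n : ℕ} (g : AutT m) (v : Vertex m n) : Vertex m n := g.val n v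
theorem restrLe_app (g : AutT m) : ∀ {N n : ℕ} (h : n ≤ N) (w : Vertex m N),
    restrLe h (g.val N w) = g.val n (restrLe h w) := by
  intro N
  induction N with
  | zero =>
    intro n h w
    have hn : n = 0 := Nat.le_zero.mp h
    subst hn; rfl
  | succ N ih =>
    intro n h w
    rcases Nat.eq_or_lt_of_le h with rfl | h'
    · rfl
    · have hN : n ≤ N := Nat.lt_succ_iff.mp h'
      calc restrLe h (g.val (N+1) w) = restrLe hN (restr (g.val (N+1) w)) := rfl
        _ = restrLe hN (g.val N (restr w)) := by rw [g.prop N w]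
        _ = g.val n (restrLe hN (restr w)) := ih hN _
        _ = g.val n (restrLe h w) := rfl
abbrev shift (m : ℕ → ℕ) (n : ℕ) : ℕ → ℕ := fun i => m (n + i)
def vappend {n k : ℕ} (v : Vertex (shift m n) k) (w : Vertex m n) : Vertex m (n + k) :=
  fun i => if h : (i : ℕ) < n then w ⟨i, h⟩
    else Fin.cast (congrArg m (by omega : n + ((i : ℕ) - n) = (i : ℕ)))
      (v ⟨(i : ℕ) - n, by omega⟩)
def topPart {n k : ℕ} (u : Vertex m (n + k)) : Vertex (shift m n) k :=
  fun i => u ⟨n + i, by omega⟩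

theorem topPart_vappend {n k : ℕ} (v : Vertex (shift m n) k) (w : Vertex m n) :
    topPart (vappend v w) = v := by
  funext i
  simp only [topPart, vappend, Fin.val_mk]
  rw [dif_neg (by omega)]
  apply Fin.ext
  simp only [Fin.coe_cast]
  exact congrArg (fun t : Fin k => (v t).1) (Fin.ext (by simp))

theorem restrLe_vappend {n k : ℕ} (v : Vertex (shift m n) k) (w : Vertex m n) :
    restrLe (Nat.le_add_right n k) (vappend v w) = w := by
  funext i
  simp only [restrLe, vappend, Fin.val_mk]
  rw [dif_pos i.2]

theorem vappend_topPart {n k : ℕ} (u : Vertex m (n + k)) :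
    vappend (topPart u) (restrLe (Nat.le_add_right n k) u) = u := by
  funext i
  by_cases h : (i : ℕ) < n
  · simp only [vappend, restrLe]
    rw [dif_pos h]
  · simp only [vappend, topPart, Fin.val_mk]
    rw [dif_neg h]
    apply Fin.ext
    simp only [Fin.coe_cast]
    exact congrArg (fun t : Fin (n+k) => (u t).1) (Fin.ext (by simp; omega))

theorem restr_vappend {n k : ℕ} (v : Vertex (shift m n) (k + 1)) (w : Vertex m n) :
    restr (n := n + k) (vappend (n := n) (k := k + 1) v w) = vappend (restr v) w := by
  funext i
  by_cases h : (i : ℕ) < n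
  · show vappend v w (Fin.castSucc i) = vappend (restr v) w i
    simp only [vappend]
    rw [dif_pos (show ((Fin.castSucc i : Fin (n+k+1)) : ℕ) < n from h), dif_pos h]
    rfl
  · show vappend v w (Fin.castSucc i) = vappend (restr v) w i
    simp only [vappend]
    rw [dif_neg (show ¬ ((Fin.castSucc i : Fin (n+k+1)) : ℕ) < n from h), dif_neg h]
    rfl

def secFun (g : AutT m) {n : ℕ} (w : Vertex m n) (k : ℕ)
    (v : Vertex (shift m n) k) : Vertex (shift m n) k :=
  topPart (g.val (n + k) (vappend v w))

theorem secFun_spec (g : AutT m) {n : ℕ} (w : Vertex m n) (k : ℕ)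
    (v : Vertex (shift m n) k) :
    g.val (n + k) (vappend v w) = vappend (secFun g w k v) (g.val n w) := by
  have h1 : restrLe (Nat.le_add_right n k) (g.val (n + k) (vappend v w)) = g.val n w := by
    rw [restrLe_app, restrLe_vappend]
  conv_lhs => rw [← vappend_topPart (g.val (n + k) (vappend v w))]
  rw [h1]
  rfl

theorem coe_inv_app (g : AutT m) (N : ℕ) (u : Vertex m N) :
    (g⁻¹ : AutT m).val N ((g : AutT m).val N u) = u := by
  have h : ((g⁻¹ : AutT m) : ∀ n, Equiv.Perm (Vertex m n)) = (↑g)⁻¹ := rfl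
  rw [h]
  exact Equiv.symm_apply_apply _ _

theorem secFun_left_inv (g : AutT m) {n : ℕ} (w : Vertex m n) (k : ℕ)
    (v : Vertex (shift m n) k) :
    secFun g⁻¹ (g.val n w) k (secFun g w k v) = v := by
  show topPart ((g⁻¹ : AutT m).val (n+k) (vappend (secFun g w k v) (g.val n w))) = v
  rw [← secFun_spec g w k v, coe_inv_app, topPart_vappend]

def sectionEquiv (g : AutT m) {n : ℕ} (w : Vertex m n) (k : ℕ) :
    Equiv.Perm (Vertex (shift m n) k) where
  toFun := secFun g w k
  invFun := secFun g⁻¹ (g.val n w) k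
  left_inv v := secFun_left_inv g w k v
  right_inv v := by
    have h2 : (g⁻¹ : AutT m)⁻¹ = g := inv_inv g
    have h3 : (g⁻¹ : AutT m).val n (g.val n w) = w := coe_inv_app g n w
    calc secFun g w k (secFun g⁻¹ (g.val n w) k v)
        = secFun (g⁻¹)⁻¹ ((g⁻¹ : AutT m).val n (g.val n w)) k
            (secFun g⁻¹ (g.val n w) k v) := by rw [h2, h3]
      _ = v := secFun_left_inv g⁻¹ (g.val n w) k v

theorem secFun_restr (g : AutT m) {n : ℕ} (w : Vertex m n) (k : ℕ)
    (v : Vertex (shift m n) (k + 1)) :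
    restr (secFun g w (k + 1) v) = secFun g w k (restr v) := by
  show restr (topPart (g.val (n + (k+1)) (vappend v w)))
      = topPart (g.val (n + k) (vappend (restr v) w))
  rw [← restr_vappend (n := n) (k := k) v w, ← g.prop (n + k) (vappend (n := n) (k := k + 1) v w)]
  rfl

/-- The section `g|_w` of a tree automorphism `g` at the level-`n` vertex `w`:
the unique automorphism of the shifted tree satisfying `(vw)·g = (v·g|_w)(w·g)`. -/
def sectionAut (g : AutT m) {n : ℕ} (w : Vertex m n) : AutT (shift m n) :=
  ⟨fun k => sectionEquiv g w k, fun k v => secFun_restr g w k v⟩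


/-! ### Distinguished vertices and predicates -/

/-- The level-`n` vertex `0⋯0` on the `0`-ray. -/
def rayV (hm : ∀ i, 0 < m i) (n : ℕ) : Vertex m n := fun i => ⟨0, hm i⟩

/-- The level-`(n+1)` neighbour `x0⋯0` of the `0`-ray: its only (possibly) non-zero
letter is the leading one, equal to `x`. -/
def nbrV (hm : ∀ i, 0 < m i) {n : ℕ} (x : Fin (m n)) : Vertex m (n + 1) :=
  fun i => if h : (i : ℕ) = n then Fin.cast (congrArg m h).symm x else ⟨0, hm i⟩

/-- The level-`n` vertex obtained from `w0` by prepending zeros. -/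
def padZero (hm : ∀ i, 0 < m i) {n₀ : ℕ} (w0 : Vertex m n₀) (n : ℕ) : Vertex m n :=
  fun i => if h : (i : ℕ) < n₀ then w0 ⟨i, h⟩ else ⟨0, hm i⟩

/-- The level-`(n+1)` vertex `x0⋯0w0`: the word `w0` at the bottom, the letter `x`
in the leading position, and zeros in between. -/
def padLead (hm : ∀ i, 0 < m i) {n₀ : ℕ} (w0 : Vertex m n₀) {n : ℕ} (x : Fin (m n)) :
    Vertex m (n + 1) :=
  fun i => if h : (i : ℕ) < n₀ then w0 ⟨i, h⟩
    else if h2 : (i : ℕ) = n then Fin.cast (congrArg m h2).symm x else ⟨0, hm i⟩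

/-- `w` lies on the `0`-ray. -/
def OnRay {n : ℕ} (w : Vertex m n) : Prop := ∀ i, (w i : ℕ) = 0

/-- `w` is a neighbour of the `0`-ray: its leading letter is non-zero and all other
letters are zero. -/
def IsNbr {n : ℕ} (w : Vertex m n) : Prop :=
  ∃ hn : 0 < n, (w ⟨n - 1, by omega⟩ : ℕ) ≠ 0 ∧
    ∀ i : Fin n, (i : ℕ) < n - 1 → (w i : ℕ) = 0

/-- A *rooted* automorphism: it permutes the first level and all its sections at
vertices of level `≥ 1` are trivial (i.e. it is an element of `Sym(X_{m_1})`). -/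
def IsRooted (g : AutT m) : Prop :=
  ∀ (n : ℕ) (w : Vertex m n), 0 < n → sectionAut g w = 1

/-- A *directed automorphism along the `0`-ray* (an element of `H_m̄`): it fixes the
`0`-ray, its sections away from the ray and its neighbours are trivial, and its
sections at neighbours of the ray are rooted. -/
def IsDirectedAut (g : AutT m) : Prop :=
  (∀ (n : ℕ) (w : Vertex m n), OnRay w → g.val n w = w) ∧
  (∀ (n : ℕ) (w : Vertex m n), ¬ OnRay w → ¬ IsNbr w → sectionAut g w = 1) ∧
  (∀ (n : ℕ) (w : Vertex m n), IsNbr w → IsRooted (sectionAut g w))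

/-- The group `𝒜_n` of `n`-th level sections of `𝒜` along the `0`-ray. -/
def Asub (hm : ∀ i, 0 < m i) (A : Subgroup (AutT m)) (n : ℕ) :
    Subgroup (AutT (shift m n)) :=
  Subgroup.closure {h | ∃ a ∈ A, h = sectionAut a (rayV hm n)}

/-- The group `ℬ_n` generated by the `n`-th level sections of `𝒜` at the neighbours
of the `0`-ray (trivial for `n = 0`, where there are no neighbours). -/
def Bsub (hm : ∀ i, 0 < m i) (A : Subgroup (AutT m)) : (n : ℕ) → Subgroup (AutT (shift m n))
  | 0 => ⊥
  | (k + 1) =>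
    Subgroup.closure {h | ∃ a ∈ A, ∃ x : Fin (m k), (x : ℕ) ≠ 0 ∧ h = sectionAut a (nbrV hm x)}

/-- The condition, for a word `w`, that position `i` is the position situated just
above the lowest non-zero letter of `w`. -/
def SpineCond {n : ℕ} (w : Vertex m n) (i : Fin n) : Prop :=
  ∃ p : Fin n, (w p : ℕ) ≠ 0 ∧ (∀ q : Fin n, (q : ℕ) < (p : ℕ) → (w q : ℕ) = 0) ∧
    (i : ℕ) = (p : ℕ) + 1

open Classical in
/-- The action of the spine-permutation automorphism `h_σ̄`: the letter just above
the lowest non-zero letter is permuted (by the permutation attached to its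
alphabet size); all-zero words are fixed. -/
noncomputable def spineFun (σ : ∀ j : ℕ, Equiv.Perm (Fin j)) {n : ℕ} (w : Vertex m n) :
    Vertex m n :=
  fun i => if SpineCond w i then (σ (m i)) (w i) else w i

/-! ### Probability measures, entropy, random walks -/

/-- `μ` is a probability measure (given by its density on a discrete group/set). -/
def IsProbMeas {G : Type*} (μ : G → ℝ) : Prop := (∀ g, 0 ≤ μ g) ∧ HasSum μ 1

/-- `μ` is symmetric. -/
def IsSymmMeas {G : Type*} [Group G] (μ : G → ℝ) : Prop := ∀ g, μ g⁻¹ = μ g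

/-- Convolution of two measures on a discrete group. -/
noncomputable def conv {G : Type*} [Group G] (μ ν : G → ℝ) : G → ℝ :=
  fun g => ∑' h, μ h * ν (h⁻¹ * g)

open Classical in
/-- `k`-fold convolution power `μ^{*k}` (with `μ^{*0} = δ_e`). -/
noncomputable def convPow {G : Type*} [Group G] (μ : G → ℝ) : ℕ → G → ℝ
  | 0 => fun g => if g = 1 then 1 else 0
  | (k + 1) => conv μ (convPow μ k)

/-- Shannon entropy `H(p) = -∑ p log p` of a discrete measure. -/
noncomputable def entropy {X : Type*} (p : X → ℝ) : ℝ := ∑' x, Real.negMulLog (p x)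

/-- Shannon entropy, valued in `ℝ≥0∞`. -/
noncomputable def entropyE {X : Type*} (p : X → ℝ) : ℝ≥0∞ :=
  ∑' x, ENNReal.ofReal (Real.negMulLog (p x))

/-- The Liouville property: every bounded `μ`-harmonic function is constant on the
subgroup generated by the support of `μ`. -/
def IsLiouville {G : Type*} [Group G] (μ : G → ℝ) : Prop :=
  ∀ f : G → ℝ, (∃ C, ∀ g, |f g| ≤ C) → (∀ g, f g = ∑' h, f (g * h) * μ h) →
    ∀ g ∈ Subgroup.closure (Function.support μ),
      ∀ h ∈ Subgroup.closure (Function.support μ), f g = f h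

/-- The position of the right random walk after `t` steps, as a function of the
increments `s 0, s 1, …` (the group element `s_t ⋯ s_2 s_1`; with this convention,
applying it to a point `x` performs the corresponding right walk on any space the
group acts on from the right). -/
def rwProd {G : Type*} [Group G] {k : ℕ} (s : Fin k → G) (t : ℕ) : G :=
  (((List.ofFn s).take t).reverse).prod

open Classical in
/-- The law of the pair (section/position) of the right `μ`-random walk observed at
the `j`-th visit of the trajectory `v·g_1, v·g_2, …` to the set `W`:
`visitLaw μ act v W sec j (h, u) = P(g at j-th visit has sec = h and position = u)`.
Here `act` is the (right) action used for the trajectory and `sec` the observable. -/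
noncomputable def visitLaw {G X H : Type*} [Group G] (μ : G → ℝ)
    (act : G → X → X) (v : X) (W : Set X) (sec : G → H) (j : ℕ) : H × X → ℝ :=
  fun p =>
    ∑' k : ℕ, ∑' s : Fin k → G,
      (∏ i, μ (s i)) *
        (if ((Finset.range k).filter fun t => act (rwProd s (t + 1)) v ∈ W).card = j
            ∧ act (rwProd s k) v ∈ W
            ∧ (sec (rwProd s k), act (rwProd s k) v) = p
          then 1 else 0)

/-! ### Electrical networks -/

/-- The Dirichlet energy of `f` with respect to the symmetric conductances `c`. -/
noncomputable def dirichlet {V : Type*} [Fintype V] (c : V → V → ℝ) (f : V → ℝ) : ℝ :=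
  (1 / 2) * ∑ u : V, ∑ v : V, c u v * (f u - f v) ^ 2

/-- Effective conductance between the disjoint vertex sets `A` and `B`. -/
noncomputable def effCond {V : Type*} [Fintype V] (c : V → V → ℝ) (A B : Set V) : ℝ :=
  sInf (dirichlet c '' {f | (∀ a ∈ A, f a = 1) ∧ (∀ b ∈ B, f b = 0)})

/-- Effective resistance between `A` and `B`, valued in `ℝ≥0∞` (infinite when the
effective conductance vanishes). -/
noncomputable def effResE {V : Type*} [Fintype V] (c : V → V → ℝ) (A B : Set V) : ℝ≥0∞ :=
  (ENNReal.ofReal (effCond c A B))⁻¹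

open Classical in
/-- Conductances of the Schreier graph of the action on level `n` with (multi-)edges
given by a generating set: `c u v = #{s ∈ gens : u·s = v}` for `u ≠ v`. -/
noncomputable def schreierCond (gens : Set (AutT m)) (n : ℕ) :
    Vertex m n → Vertex m n → ℝ :=
  fun u v => if u = v then 0 else (Set.ncard {s | s ∈ gens ∧ app s u = v} : ℝ)

open Classical in
/-- Conductances of the Schreier graph of the action on level `n`, with weights
`κ s` on the edge corresponding to the generator `s`. -/
noncomputable def schreierCondWt (S : Finset (AutT m)) (κ : AutT m → ℝ) (n : ℕ) :
    Vertex m n → Vertex m n → ℝ :=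
  fun u v => if u = v then 0 else ∑ s ∈ S.filter (fun s => app s u = v), κ s

/-- The set `𝔸_n` of level-`n` vertices where some generator `s ∈ S` has a
non-trivial section lying in `𝒜_n`. -/
def ASet (hm : ∀ i, 0 < m i) (A : Subgroup (AutT m)) (S : Finset (AutT m)) (n : ℕ) :
    Set (Vertex m n) :=
  {w | ∃ s ∈ S, sectionAut s w ∈ Asub hm A n ∧ sectionAut s w ≠ 1}

/-- The set `𝔹_n` of level-`n` vertices where some generator `s ∈ S` has a
non-trivial section lying in `ℬ_n`. -/
def BSet (hm : ∀ i, 0 < m i) (A : Subgroup (AutT m)) (S : Finset (AutT m)) (n : ℕ) :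
    Set (Vertex m n) :=
  {w | ∃ s ∈ S, sectionAut s w ∈ Bsub hm A n ∧ sectionAut s w ≠ 1}

/-- The orbit of a level-`n` vertex under a subgroup `G ≤ Aut(T_m)`. -/
def orbitOf (G : Subgroup (AutT m)) {n : ℕ} (v : Vertex m n) : Set (Vertex m n) :=
  {u | ∃ g : AutT m, g ∈ G ∧ app g v = u}

/-! ### Regular trees and automata -/

/-- The constant valency sequence (regular rooted tree `T_mm`). -/
abbrev constSeq (mm : ℕ) : ℕ → ℕ := fun _ => mm


/-- An invertible automaton over the alphabet of a regular tree: a finite set of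
automorphisms closed under taking sections at one-letter words. -/
def IsAutomaton {mm : ℕ} (A : Finset (AutT (constSeq mm))) : Prop :=
  ∀ a ∈ A, ∀ x : Vertex (constSeq mm) 1, sectionAut a x ∈ A

/-- Bounded activity: for every state `a`, the number of level-`n` words with
non-trivial section is bounded uniformly in `n`. -/
def IsBoundedActivity {mm : ℕ} (A : Finset (AutT (constSeq mm))) : Prop :=
  ∀ a ∈ A, ∃ B : ℕ, ∀ n : ℕ,
    Set.ncard {w : Vertex (constSeq mm) n | sectionAut a w ≠ 1} ≤ B

/-- Word length with respect to a finite symmetric generating set. -/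
noncomputable def wordLen {G : Type*} [Group G] (S : Set G) (g : G) : ℕ :=
  sInf {k | ∃ l : List G, l.length = k ∧ (∀ s ∈ l, s ∈ S) ∧ l.prod = g}


/-!
Write every `s ∈ S` as a product of at most `ℓ` generators, each a directed element of `𝒜` or a
rooted automorphism. A rooted automorphism moves only the first letter; a directed one moves
only the lowest non-zero letter (keeping it non-zero) and the letter just above it. So along the
trajectory of a word under the factors of `s`, whether the letter at position `p` is zero can
change only after a non-zero letter has appeared at one of the positions `p - ℓ, …, p - 1`.
Since `(g h)|_w = g|_{w·h} h|_w`, the section `s|_w` is the product of the sections of the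
factors along that trajectory. Take `n₀ = ℓ + 1` and all words of length `n₀` as the `w_j`.
A word `0⋯0w_j` never becomes a neighbour of the ray, so every factor contributes an element of
`𝒜_n`; a word `x0⋯0w_j` never reaches the ray, so every factor contributes to `ℬ_n`. Any other
word has a non-zero letter strictly between positions `ℓ` and `n`, so along the trajectory it
always keeps a non-zero letter below the top, is neither on nor next to the ray, and every
factor's section is trivial.
-/

theorem sectionAut_one {n : ℕ} (w : Vertex m n) : sectionAut (1 : AutT m) w = 1 := by
  apply Subtype.ext; funext k; apply Equiv.ext; intro v
  exact topPart_vappend v w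

theorem sectionAut_mul (g h : AutT m) {n : ℕ} (w : Vertex m n) :
    sectionAut (g * h) w = sectionAut g (h.val n w) * sectionAut h w := by
  apply Subtype.ext; funext k; apply Equiv.ext; intro v
  show topPart (g.val (n + k) (h.val (n + k) (vappend v w))) = _
  rw [secFun_spec h w k v]
  rfl

theorem list_prod_cons_val (g : AutT m) (L : List (AutT m)) {N : ℕ} (u : Vertex m N) :
    (g :: L).prod.val N u = g.val N (L.prod.val N u) := by
  rw [List.prod_cons]
  rfl

theorem sectionAut_list_prod_mem {N : ℕ} (K : Subgroup (AutT (shift m N)))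
    {L : List (AutT m)} {w : Vertex m N}
    (h : ∀ g L', g :: L' <:+ L → sectionAut g (L'.prod.val N w) ∈ K) :
    sectionAut L.prod w ∈ K := by
  induction L with
  | nil => rw [List.prod_nil, sectionAut_one]; exact K.one_mem
  | cons g L ih =>
    rw [List.prod_cons, sectionAut_mul]
    exact K.mul_mem (h g L (List.suffix_refl _))
      (ih fun g' L' hs => h g' L' (hs.trans (List.suffix_cons g L)))

theorem apply_eq_of_sectionAut_restrLe_eq_one (g : AutT m) {N k : ℕ} (hk : k ≤ N)
    (u : Vertex m N) (hg : sectionAut g (restrLe hk u) = 1) (i : Fin N) (hi : k ≤ i) :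
    g.val N u i = u i := by
  obtain ⟨l, rfl⟩ := Nat.exists_eq_add_of_le hk
  have hsec : secFun g (restrLe hk u) l (topPart u) = topPart u :=
    congrArg (fun h : AutT (shift m k) => h.val l (topPart u)) hg
  have h := secFun_spec g (restrLe hk u) l (topPart u)
  rw [vappend_topPart, hsec] at h
  rw [h]
  conv_rhs => rw [← vappend_topPart u]
  simp only [vappend, dif_neg (not_lt.mpr hi)]

theorem onRay_eq_rayV (hm : ∀ i, 0 < m i) {N : ℕ} {u : Vertex m N} (h : OnRay u) :
    u = rayV hm N :=
  funext fun i => Fin.ext (h i)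

theorem IsNbr.onRay_restr {n : ℕ} {x : Vertex m (n + 1)} (h : IsNbr x) : OnRay (restr x) :=
  fun i => h.2.2 i.castSucc i.2

theorem IsNbr.last_ne_zero {n : ℕ} {x : Vertex m (n + 1)} (h : IsNbr x) :
    (x (Fin.last n) : ℕ) ≠ 0 :=
  h.2.1

theorem IsNbr.eq_nbrV (hm : ∀ i, 0 < m i) {n : ℕ} {x : Vertex m (n + 1)} (h : IsNbr x) :
    x = nbrV hm (x (Fin.last n)) := by
  funext i
  simp only [nbrV]
  split_ifs with hi
  · obtain rfl : i = Fin.last n := Fin.ext hi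
    rfl
  · exact Fin.ext (h.2.2 i (by simp only [Fin.val_last] at hi; omega))

theorem last_ne_zero_of_onRay_restr {n : ℕ} {x : Vertex m (n + 1)} (hx : ¬ OnRay x)
    (hr : OnRay (restr x)) : (x (Fin.last n) : ℕ) ≠ 0 := by
  refine fun h0 => hx fun i => ?_
  induction i using Fin.lastCases with
  | last => exact h0
  | cast i => exact hr i

theorem IsDirectedAut.onRay_of_onRay_apply {a : AutT m} (ha : IsDirectedAut a) {N : ℕ}
    {x : Vertex m N} (h : OnRay (a.val N x)) : OnRay x := by
  rwa [(a.val N).injective (ha.1 N _ h)] at h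

theorem IsDirectedAut.apply_last_ne_zero {a : AutT m} (ha : IsDirectedAut a) {n : ℕ}
    {x : Vertex m (n + 1)} (hx : ¬ OnRay x) (hr : OnRay (restr x)) :
    (a.val (n + 1) x (Fin.last n) : ℕ) ≠ 0 := by
  refine last_ne_zero_of_onRay_restr (mt ha.onRay_of_onRay_apply hx) ?_
  rw [a.prop n x, ha.1 n _ hr]
  exact hr

theorem ne_zero_iff_or_of_directed_or_rooted {g : AutT m} (hg : IsDirectedAut g ∨ IsRooted g)
    {N : ℕ} (u : Vertex m N) (p : Fin N) (hp0 : 0 < (p : ℕ)) :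
    ((g.val N u p : ℕ) ≠ 0 ↔ (u p : ℕ) ≠ 0) ∨
      ∃ q : Fin N, (q : ℕ) + 1 = p ∧ (g.val N u q : ℕ) ≠ 0 := by
  obtain ⟨_ | q, hp⟩ := p
  · exact absurd hp0 (lt_irrefl 0)
  have hq : q < N := by omega
  have fixed_of_sectionAut_eq_one (h : sectionAut g (restrLe hq u) = 1) :
      ((g.val N u ⟨q + 1, hp⟩ : ℕ) ≠ 0 ↔ (u ⟨q + 1, hp⟩ : ℕ) ≠ 0) ∨
        ∃ q' : Fin N, (q' : ℕ) + 1 = q + 1 ∧ (g.val N u q' : ℕ) ≠ 0 := by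
    rw [apply_eq_of_sectionAut_restrLe_eq_one g hq u h _ le_rfl]
    exact Or.inl Iff.rfl
  rcases hg with ha | hb
  -- Split on whether the prefix of length `q + 1` lies on the ray, next to it, or neither;
  -- in the last case the section there is trivial.
  · set v : Vertex m (q + 2) := restrLe hp u
    have hv : g.val N u ⟨q + 1, hp⟩ = g.val (q + 2) v (Fin.last (q + 1)) :=
      congrFun (restrLe_app g hp u) (Fin.last (q + 1))
    by_cases hx : OnRay (restr v)
    · by_cases hvr : OnRay v
      · left
        rw [hv, ha.1 _ v hvr]
        exact Iff.rfl
      · exact Or.inl (iff_of_true (hv ▸ ha.apply_last_ne_zero hvr hx)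
          (last_ne_zero_of_onRay_restr hvr hx))
    · by_cases hy : OnRay (restr (restr v))
      · refine Or.inr ⟨⟨q, hq⟩, rfl, ?_⟩
        calc (g.val N u ⟨q, hq⟩ : ℕ) = (g.val (q + 1) (restr v) (Fin.last q) : ℕ) :=
              congrArg Fin.val (congrFun (restrLe_app g hq u) (Fin.last q))
          _ ≠ 0 := ha.apply_last_ne_zero hx hy
      · exact fixed_of_sectionAut_eq_one (ha.2.1 _ _ hx (mt IsNbr.onRay_restr hy))
  · exact fixed_of_sectionAut_eq_one (hb _ _ q.succ_pos)

theorem list_prod_ne_zero_iff_or {L : List (AutT m)}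
    (hL : ∀ g ∈ L, IsDirectedAut g ∨ IsRooted g) {N : ℕ} (u : Vertex m N) (p : Fin N)
    (hLp : L.length ≤ p) :
    ((L.prod.val N u p : ℕ) ≠ 0 ↔ (u p : ℕ) ≠ 0) ∨
      ∃ q : Fin N, p - L.length ≤ q ∧ q < p ∧ (L.prod.val N u q : ℕ) ≠ 0 := by
  induction L with
  | nil => exact Or.inl Iff.rfl
  | cons g L ih =>
    have hg := hL g List.mem_cons_self
    simp only [List.length_cons] at hLp ⊢
    simp only [list_prod_cons_val]
    set v := L.prod.val N u
    rcases ih (fun g' hg' => hL g' (List.mem_cons_of_mem g hg')) (by omega) with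
      hp | ⟨q, hq₁, hq₂, hq⟩
    · rcases ne_zero_iff_or_of_directed_or_rooted hg v p (by omega) with hp' | ⟨r, hr, hr0⟩
      · exact Or.inl (hp'.trans hp)
      · exact Or.inr ⟨r, by omega, by omega, hr0⟩
    · rcases ne_zero_iff_or_of_directed_or_rooted hg v q (by omega) with hq' | ⟨r, hr, hr0⟩
      · exact Or.inr ⟨q, by omega, hq₂, hq'.mpr hq⟩
      · exact Or.inr ⟨r, by omega, by omega, hr0⟩

theorem not_onRay_of_ne_zero {N : ℕ} {v : Vertex m N} {p : Fin N} (hp : (v p : ℕ) ≠ 0) :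
    ¬ OnRay v :=
  fun h => hp (h p)

theorem not_isNbr_of_ne_zero_of_lt {n : ℕ} {v : Vertex m (n + 1)} {p : Fin (n + 1)}
    (hpn : (p : ℕ) < n) (hp : (v p : ℕ) ≠ 0) : ¬ IsNbr v :=
  fun h => hp (h.2.2 p hpn)

/-- Directed elements of `𝒜` and rooted automorphisms: these include the generators `𝒜 ∪ ℬ` of
`M(𝒜, ℬ)`. -/
def IsPrincipalGen (A : Subgroup (AutT m)) (g : AutT m) : Prop :=
  (g ∈ A ∧ IsDirectedAut g) ∨ IsRooted g

theorem IsPrincipalGen.directed_or_rooted {A : Subgroup (AutT m)} {g : AutT m}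
    (hg : IsPrincipalGen A g) : IsDirectedAut g ∨ IsRooted g :=
  hg.imp And.right id

theorem exists_list_prod_eq_of_mem_sup {A B : Subgroup (AutT m)}
    (hAdir : ∀ a ∈ A, IsDirectedAut a) (hBrooted : ∀ b ∈ B, IsRooted b) {s : AutT m}
    (hs : s ∈ A ⊔ B) : ∃ L : List (AutT m), (∀ g ∈ L, IsPrincipalGen A g) ∧ L.prod = s := by
  rw [← A.closure_eq, ← B.closure_eq, ← Subgroup.closure_union, ← Subgroup.mem_toSubmonoid,
    Subgroup.closure_toSubmonoid] at hs
  obtain ⟨L, hL, rfl⟩ := Submonoid.exists_list_of_mem_closure hs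
  refine ⟨L, fun g hg => ?_, rfl⟩
  have hAB : g ∈ A ∨ g ∈ B := by
    rcases hL g hg with h | h
    · exact h
    · simpa only [Set.mem_inv, Set.mem_union, SetLike.mem_coe, inv_mem_iff] using h
  exact hAB.imp (fun h => ⟨h, hAdir g h⟩) (hBrooted g)

theorem sectionAut_eq_one_of_directed_or_rooted {g : AutT m}
    (hg : IsDirectedAut g ∨ IsRooted g) {n : ℕ} {v : Vertex m (n + 1)} (hr : ¬ OnRay v)
    (hv : ¬ IsNbr v) : sectionAut g v = 1 :=
  hg.elim (fun ha => ha.2.1 _ v hr hv) (fun hb => hb _ v n.succ_pos)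

theorem IsPrincipalGen.sectionAut_mem_Asub (hm : ∀ i, 0 < m i) {A : Subgroup (AutT m)}
    {g : AutT m} (hg : IsPrincipalGen A g) {n : ℕ} {v : Vertex m (n + 1)} (hv : ¬ IsNbr v) :
    sectionAut g v ∈ Asub hm A (n + 1) := by
  by_cases hr : OnRay v
  · rcases hg with ⟨hgA, -⟩ | hb
    · rw [onRay_eq_rayV hm hr]
      exact Subgroup.subset_closure ⟨g, hgA, rfl⟩
    · rw [hb _ v n.succ_pos]
      exact one_mem _
  · rw [sectionAut_eq_one_of_directed_or_rooted hg.directed_or_rooted hr hv]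
    exact one_mem _

theorem IsPrincipalGen.sectionAut_mem_Bsub (hm : ∀ i, 0 < m i) {A : Subgroup (AutT m)}
    {g : AutT m} (hg : IsPrincipalGen A g) {n : ℕ} {v : Vertex m (n + 1)} (hr : ¬ OnRay v) :
    sectionAut g v ∈ Bsub hm A (n + 1) := by
  by_cases hv : IsNbr v
  · rcases hg with ⟨hgA, -⟩ | hb
    · exact Subgroup.subset_closure
        ⟨g, hgA, v (Fin.last n), hv.last_ne_zero, by rw [← hv.eq_nbrV hm]⟩
    · rw [hb _ v n.succ_pos]
      exact one_mem _
  · rw [sectionAut_eq_one_of_directed_or_rooted hg.directed_or_rooted hr hv]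
    exact one_mem _

section ListProd

variable {L : List (AutT m)} {n : ℕ} {w : Vertex m (n + 1)}

theorem list_prod_ne_zero_iff_or_of_cons_suffix (hL : ∀ g ∈ L, IsDirectedAut g ∨ IsRooted g)
    {g : AutT m} {L' : List (AutT m)} (hs : g :: L' <:+ L) (p : Fin (n + 1))
    (hLp : L.length ≤ p) :
    ((L'.prod.val _ w p : ℕ) ≠ 0 ↔ (w p : ℕ) ≠ 0) ∨
      ∃ q : Fin (n + 1), q < p ∧ (L'.prod.val _ w q : ℕ) ≠ 0 := by
  have hlen := hs.length_le
  simp only [List.length_cons] at hlen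
  exact (list_prod_ne_zero_iff_or (fun g hg => hL g (hs.subset (List.mem_cons_of_mem _ hg))) w p
    (by omega)).imp_right fun ⟨q, _, hq, hq0⟩ => ⟨q, hq, hq0⟩

theorem sectionAut_list_prod_mem_Asub (hm : ∀ i, 0 < m i) {A : Subgroup (AutT m)}
    (hL : ∀ g ∈ L, IsPrincipalGen A g) (hLn : L.length ≤ n) (hw : (w (Fin.last n) : ℕ) = 0) :
    sectionAut L.prod w ∈ Asub hm A (n + 1) := by
  refine sectionAut_list_prod_mem _ fun g L' hs =>
    (hL g (hs.subset List.mem_cons_self)).sectionAut_mem_Asub hm ?_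
  rcases list_prod_ne_zero_iff_or_of_cons_suffix (w := w)
      (fun g hg => (hL g hg).directed_or_rooted) hs (Fin.last n) hLn with h | ⟨q, hq, hq0⟩
  · exact fun hv => hv.last_ne_zero (by simpa [hw] using h)
  · exact not_isNbr_of_ne_zero_of_lt hq hq0

theorem sectionAut_list_prod_mem_Bsub (hm : ∀ i, 0 < m i) {A : Subgroup (AutT m)}
    (hL : ∀ g ∈ L, IsPrincipalGen A g) (hLn : L.length ≤ n) (hw : (w (Fin.last n) : ℕ) ≠ 0) :
    sectionAut L.prod w ∈ Bsub hm A (n + 1) := by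
  refine sectionAut_list_prod_mem _ fun g L' hs =>
    (hL g (hs.subset List.mem_cons_self)).sectionAut_mem_Bsub hm ?_
  rcases list_prod_ne_zero_iff_or_of_cons_suffix (w := w)
      (fun g hg => (hL g hg).directed_or_rooted) hs (Fin.last n) hLn with h | ⟨q, -, hq0⟩
  · exact not_onRay_of_ne_zero (h.mpr hw)
  · exact not_onRay_of_ne_zero hq0

theorem sectionAut_list_prod_eq_one (hL : ∀ g ∈ L, IsDirectedAut g ∨ IsRooted g)
    (p : Fin (n + 1)) (hpn : (p : ℕ) < n) (hLp : L.length ≤ p) (hw : (w p : ℕ) ≠ 0) :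
    sectionAut L.prod w = 1 := by
  rw [← Subgroup.mem_bot]
  refine sectionAut_list_prod_mem ⊥ fun g L' hs => Subgroup.mem_bot.mpr ?_
  obtain ⟨q, hq, hq0⟩ : ∃ q : Fin (n + 1), (q : ℕ) < n ∧ (L'.prod.val _ w q : ℕ) ≠ 0 :=
    (list_prod_ne_zero_iff_or_of_cons_suffix hL hs p hLp).elim (fun h => ⟨p, hpn, h.mpr hw⟩)
      fun ⟨q, hq, hq0⟩ => ⟨q, by omega, hq0⟩
  exact sectionAut_eq_one_of_directed_or_rooted (hL g (hs.subset List.mem_cons_self))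
    (not_onRay_of_ne_zero hq0) (not_isNbr_of_ne_zero_of_lt hq hq0)

end ListProd

theorem padZero_apply_of_le (hm : ∀ i, 0 < m i) {n₀ N : ℕ} (v : Vertex m n₀) (i : Fin N)
    (hi : n₀ ≤ i) : (padZero hm v N i : ℕ) = 0 := by
  simp [padZero, not_lt.mpr hi]

theorem padLead_apply_last (hm : ∀ i, 0 < m i) {n₀ n : ℕ} (v : Vertex m n₀) (x : Fin (m n))
    (hn : n₀ ≤ n) : (padLead hm v x (Fin.last n) : ℕ) = x := by
  simp [padLead, not_lt.mpr hn]

theorem eq_padZero_or_eq_padLead (hm : ∀ i, 0 < m i) {n₀ n : ℕ} (hn : n₀ ≤ n + 1)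
    (w : Vertex m (n + 1)) (hw : ∀ q : Fin (n + 1), n₀ ≤ q → q < n → (w q : ℕ) = 0) :
    w = padZero hm (restrLe hn w) (n + 1) ∨
      ((w (Fin.last n) : ℕ) ≠ 0 ∧ w = padLead hm (restrLe hn w) (w (Fin.last n))) := by
  have high (i : Fin (n + 1)) (hi : ¬ (i : ℕ) < n₀) (hin : (i : ℕ) ≠ n) : (w i : ℕ) = 0 :=
    hw i (by omega) (by omega)
  by_cases htop : (w (Fin.last n) : ℕ) = 0
  · refine Or.inl (funext fun i => Fin.ext ?_)
    simp only [padZero]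
    split_ifs with hi
    · rfl
    · by_cases hin : (i : ℕ) = n
      · obtain rfl : i = Fin.last n := Fin.ext hin
        exact htop
      · exact high i hi hin
  · refine Or.inr ⟨htop, funext fun i => Fin.ext ?_⟩
    simp only [padLead]
    split_ifs with hi hin
    · rfl
    · obtain rfl : i = Fin.last n := Fin.ext hin
      simp
    · exact high i hi hin

theorem sections_of_generating_set_general
    (m : ℕ → ℕ) (hm : ∀ i, 0 < m i)
    (A B : Subgroup (AutT m))
    (hAdir : ∀ a ∈ A, IsDirectedAut a)
    (hBrooted : ∀ b ∈ B, IsRooted b)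
    (S : Finset (AutT m)) (hS : (S : Set (AutT m)) ⊆ (A ⊔ B : Subgroup (AutT m))) :
    ∃ (n₀ kk : ℕ) (ws : Fin kk → Vertex m n₀),
      ∀ n : ℕ, n₀ < n + 1 →
        (∀ w : Vertex m (n + 1),
          ¬ ((∃ j, w = padZero hm (ws j) (n + 1)) ∧
             (∃ (j : Fin kk) (x : Fin (m n)), (x : ℕ) ≠ 0 ∧ w = padLead hm (ws j) x))) ∧
        (∀ s ∈ S, ∀ w : Vertex m (n + 1),
          ((∃ j, w = padZero hm (ws j) (n + 1)) →
            sectionAut s w ∈ Asub hm A (n + 1)) ∧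
          ((∃ (j : Fin kk) (x : Fin (m n)), (x : ℕ) ≠ 0 ∧ w = padLead hm (ws j) x) →
            sectionAut s w ∈ Bsub hm A (n + 1)) ∧
          ((¬ ∃ j, w = padZero hm (ws j) (n + 1)) →
            (¬ ∃ (j : Fin kk) (x : Fin (m n)), (x : ℕ) ≠ 0 ∧ w = padLead hm (ws j) x) →
            sectionAut s w = 1)) := by
  choose L hLgen hLprod using
    fun s (hs : s ∈ S) => exists_list_prod_eq_of_mem_sup hAdir hBrooted (hS hs)
  obtain ⟨ℓ, hℓ⟩ : ∃ ℓ, ∀ s (hs : s ∈ S), (L s hs).length ≤ ℓ :=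
    ⟨S.attach.sup fun s => (L s.1 s.2).length, fun s hs =>
      Finset.le_sup (f := fun s : S => (L s.1 s.2).length) (S.mem_attach ⟨s, hs⟩)⟩
  set e := Fintype.equivFin (Vertex m (ℓ + 1))
  refine ⟨ℓ + 1, Fintype.card (Vertex m (ℓ + 1)), e.symm, fun n hn => ?_⟩
  have last_padZero (j) : (padZero hm (e.symm j) (n + 1) (Fin.last n) : ℕ) = 0 :=
    padZero_apply_of_le hm _ _ (by simp; omega)
  have last_padLead (j) (x : Fin (m n)) : (padLead hm (e.symm j) x (Fin.last n) : ℕ) = x :=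
    padLead_apply_last hm _ x (by omega)
  refine ⟨?_, fun s hs w => ?_⟩
  · rintro w ⟨⟨j, rfl⟩, ⟨j', x, hx, hw⟩⟩
    exact hx (by rw [← last_padLead j' x, ← hw, last_padZero])
  obtain ⟨Ls, hLs, hLsℓ, rfl⟩ :
      ∃ Ls : List (AutT m), (∀ g ∈ Ls, IsPrincipalGen A g) ∧ Ls.length ≤ ℓ ∧ Ls.prod = s :=
    ⟨L s hs, hLgen s hs, hℓ s hs, hLprod s hs⟩
  refine ⟨?_, ?_, fun hA hB => ?_⟩
  · rintro ⟨j, rfl⟩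
    exact sectionAut_list_prod_mem_Asub hm hLs (by omega) (last_padZero j)
  · rintro ⟨j, x, hx, rfl⟩
    exact sectionAut_list_prod_mem_Bsub hm hLs (by omega) (by rwa [last_padLead])
  · obtain ⟨q, hq₁, hq₂, hq⟩ : ∃ q : Fin (n + 1), ℓ + 1 ≤ q ∧ q < n ∧ (w q : ℕ) ≠ 0 := by
      by_contra! h
      rcases eq_padZero_or_eq_padLead hm (by omega) w h with hw | ⟨hw₀, hw⟩
      · exact hA ⟨e _, by rwa [e.symm_apply_apply]⟩
      · exact hB ⟨e _, _, hw₀, by rwa [e.symm_apply_apply]⟩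
    exact sectionAut_list_prod_eq_one (fun g hg => (hLs g hg).directed_or_rooted) q hq₂
      (by omega) hq

/-- For a finite set `S ⊆ M(𝒜,ℬ)` there are `n₀` and finitely many
words `w_1, …, w_k` of length `n₀` such that at every level `n+1 > n₀`, setting
`𝔸 = {0⋯0w_j}` and `𝔹 = {x0⋯0w_j : x ≠ 0}`, the sections of every `s ∈ S` lie in
`𝒜_{n+1}` on `𝔸`, in `ℬ_{n+1}` on `𝔹`, and are trivial elsewhere; moreover `𝔸` and
`𝔹` are disjoint. -/
theorem sections_of_generating_set
    (m : ℕ → ℕ) (hm : ∀ i, 0 < m i) (hm2 : ∀ i, 2 ≤ m i)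
    (M : ℕ) (hbd : ∀ i, m i ≤ M)
    (A B : Subgroup (AutT m))
    (hAfin : (A : Set (AutT m)).Finite) (hAdir : ∀ a ∈ A, IsDirectedAut a)
    (hBfin : (B : Set (AutT m)).Finite) (hBrooted : ∀ b ∈ B, IsRooted b)
    (S : Finset (AutT m)) (hS : (S : Set (AutT m)) ⊆ (A ⊔ B : Subgroup (AutT m))) :
    ∃ (n₀ kk : ℕ) (ws : Fin kk → Vertex m n₀),
      ∀ n : ℕ, n₀ < n + 1 →
        (∀ w : Vertex m (n + 1),
          ¬ ((∃ j, w = padZero hm (ws j) (n + 1)) ∧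
             (∃ (j : Fin kk) (x : Fin (m n)), (x : ℕ) ≠ 0 ∧ w = padLead hm (ws j) x))) ∧
        (∀ s ∈ S, ∀ w : Vertex m (n + 1),
          ((∃ j, w = padZero hm (ws j) (n + 1)) →
            sectionAut s w ∈ Asub hm A (n + 1)) ∧
          ((∃ (j : Fin kk) (x : Fin (m n)), (x : ℕ) ≠ 0 ∧ w = padLead hm (ws j) x) →
            sectionAut s w ∈ Bsub hm A (n + 1)) ∧
          ((¬ ∃ j, w = padZero hm (ws j) (n + 1)) →
            (¬ ∃ (j : Fin kk) (x : Fin (m n)), (x : ℕ) ≠ 0 ∧ w = padLead hm (ws j) x) →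
            sectionAut s w = 1)) :=
  sections_of_generating_set_general m hm A B hAdir hBrooted S hS

end Paper
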